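/- Uniform short-time Green function bound on the directed triangular lattice (the bound on the term I in the proof of Proposition 3.12 of the paper): For y in the triangular lattice ℤ + ℤ·τ and n ∈ ℕ, let p_n(y) = 3^{−n} · card{ (s₁, …, s_n) ∈ {1, τ, τ²}ⁿ : s₁ + ⋯ + s_n = y } be the probability that the simple random walk on the directed triangular lattice started at 0 is at y after n steps. Then there exists a constant C > 0 such that for every y ∈ ℤ + ℤ·τ, Σ_{n=0}^{⌊|y|²⌋} p_n(y) ≤ C. -/

import Mathlib

/-- The primitive third root of unity `τ = e^{2πi/3}`. -/
noncomputable def triTau : ℂ := Complex.exp (2 * Real.pi * Complex.I / 3)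

/-- `p n y`: the probability that the simple random walk on the directed triangular
lattice (i.i.d. steps uniform on `{1, τ, τ²}`) started at `0` is at `y` after `n`
steps. -/
noncomputable def triWalkProb (n : ℕ) (y : ℂ) : ℝ :=
  (3 : ℝ) ^ (-(n : ℤ)) *
    Nat.card { s : Fin n → Fin 3 // ∑ i, triTau ^ ((s i : ℕ)) = y }

/-!
A walk `s` of length `n` ends at `∑ⱼ kⱼ τʲ`, where `kⱼ = #{i | s i = j}`. Since
`‖∑ⱼ xⱼ τʲ‖² = 3/2 ∑ⱼ xⱼ²` whenever `∑ⱼ xⱼ = 0`, the endpoint `y` and `n` determine the counts `k`,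
so `p_n(y) ≤ 3⁻ⁿ multinomial(k)` and `‖y‖² = 3/2 ∑ⱼ (kⱼ - n/3)²`. The multinomial theorem gives
`multinomial(k) ∏ kⱼ^kⱼ ≤ nⁿ`, and `k log (k/m) ≥ k - m + (√k - √m)²` (relative entropy dominates
squared Hellinger distance) gives `3⁻ⁿ nⁿ / ∏ kⱼ^kⱼ ≤ exp (-H)` with `H = ∑ⱼ (√kⱼ - √(n/3))²`.
If all `kⱼ` lie in `[n/6, n/2]`, Stirling's formula improves the first bound by a factor `O(1/n)`
and `H ≥ 3/(5n) ∑ⱼ (kⱼ - n/3)²`, so `p_n(y) = O(1/‖y‖²)`; otherwise `H ≥ n/75`. Summing over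
`n ≤ ‖y‖²` leaves `O(1) + ∑ₙ e^{-n/75}`.
-/

open Finset Real
open scoped Nat

section FiberCard

variable {α ι : Type*} [Fintype α] [DecidableEq ι]

def fiberCard (f : α → ι) (i : ι) : ℕ := #{a | f a = i}

lemma sum_fiberCard [Fintype ι] (f : α → ι) : ∑ i, fiberCard f i = Fintype.card α := by
  rw [← Finset.card_univ, card_eq_sum_card_fiberwise (t := univ) (fun a _ => mem_univ (f a))]
  rfl

lemma exists_perm_comp_eq_of_fiberCard_eq {f g : α → ι} (h : fiberCard f = fiberCard g) :
    ∃ σ : Equiv.Perm α, f ∘ σ = g := by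
  have e : ∀ i, {a // g a = i} ≃ {a // f a = i} := fun i =>
    Fintype.equivOfCardEq <| by
      rw [Fintype.card_subtype, Fintype.card_subtype]; exact congrFun h.symm i
  exact ⟨Equiv.ofFiberEquiv e, funext (Equiv.ofFiberEquiv_map e)⟩

lemma card_perm_comp_eq [Fintype ι] [DecidableEq α] (f : α → ι) (σ₀ : Equiv.Perm α) :
    #{σ : Equiv.Perm α | f ∘ σ = f ∘ σ₀} = ∏ i, (fiberCard f i)! := by
  have hshift : ∀ σ : Equiv.Perm α, f ∘ σ = f ∘ σ₀ ↔ f ∘ ⇑(σ * σ₀⁻¹) = f := fun σ => by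
    constructor
    · intro h; ext a; simpa using congrFun h (σ₀⁻¹ a)
    · intro h; ext a; simpa using congrFun h (σ₀ a)
  rw [← Fintype.card_subtype, Fintype.card_congr
      (Equiv.subtypeEquiv (q := fun σ : Equiv.Perm α => f ∘ ⇑σ = f) (Equiv.mulRight σ₀⁻¹) hshift),
    DomMulAct.stabilizer_card]
  simp only [Fintype.card_subtype, fiberCard]

theorem card_fiberCard_eq_le_multinomial [Fintype ι] [DecidableEq α] (f : α → ι) :
    #{g : α → ι | fiberCard g = fiberCard f} ≤ Nat.multinomial univ (fiberCard f) := by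
  set B := ({g : α → ι | fiberCard g = fiberCard f} : Finset (α → ι))
  have hfiber : ∀ g ∈ B, #{σ : Equiv.Perm α | f ∘ σ = g} = ∏ i, (fiberCard f i)! := by
    intro g hg
    obtain ⟨σ₀, rfl⟩ := exists_perm_comp_eq_of_fiberCard_eq (mem_filter.1 hg).2.symm
    exact card_perm_comp_eq f σ₀
  have hB : #B * ∏ i, (fiberCard f i)! ≤ (Fintype.card α)! :=
    calc #B * ∏ i, (fiberCard f i)! = ∑ g ∈ B, #{σ : Equiv.Perm α | f ∘ σ = g} :=
          (sum_const_nat hfiber).symm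
      _ ≤ #(univ : Finset (Equiv.Perm α)) := by
          rw [sum_card_fiberwise_eq_card_filter]; exact card_filter_le _ _
      _ = (Fintype.card α)! := by rw [Finset.card_univ, Fintype.card_perm]
  have hspec := Nat.multinomial_spec univ (fiberCard f)
  rw [sum_fiberCard] at hspec
  rw [← hspec, mul_comm] at hB
  exact Nat.le_of_mul_le_mul_left hB (prod_pos fun i _ => Nat.factorial_pos _)

end FiberCard

lemma exp_neg_le_inv {x : ℝ} (hx : 0 < x) : exp (-x) ≤ x⁻¹ := by
  rw [exp_neg]
  exact inv_anti₀ hx (by linarith [add_one_le_exp x])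

lemma sum_range_exp_neg_div_le {c : ℝ} (hc : 0 < c) (N : ℕ) :
    ∑ n ∈ range N, exp (-(n / c)) ≤ c + 1 := by
  have hr : exp (-(1 / c)) ≤ c / (c + 1) := by
    rw [exp_neg, inv_le_comm₀ (exp_pos _) (by positivity)]
    calc (c / (c + 1))⁻¹ = 1 / c + 1 := by field_simp; ring
      _ ≤ exp (1 / c) := add_one_le_exp _
  set r := exp (-(1 / c))
  have hpow : ∀ n : ℕ, exp (-(n / c)) = r ^ n := fun n => by
    rw [← exp_nat_mul]; ring_nf
  have hr1 : r < 1 := hr.trans_lt ((div_lt_one (by positivity)).2 (by linarith))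
  simp_rw [hpow, range_eq_Ico]
  calc ∑ n ∈ Ico 0 N, r ^ n ≤ r ^ 0 / (1 - r) := geom_sum_Ico_le_of_lt_one (exp_pos _).le hr1
    _ ≤ c + 1 := by
      rw [pow_zero, div_le_iff₀ (by linarith)]
      have : (c + 1) * r ≤ c := by rwa [le_div_iff₀' (by positivity)] at hr
      linarith

lemma sq_sub_div_le_sq_sqrt_sub_sqrt {x m : ℝ} (hx : 0 ≤ x) (hm : 0 < m) (hxm : x ≤ 3 / 2 * m) :
    (x - m) ^ 2 / (5 * m) ≤ (√x - √m) ^ 2 := by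
  rw [div_le_iff₀ (by positivity)]
  have hs := sq_sqrt hx
  have ht := sq_sqrt hm.le
  have hsum : (√x + √m) ^ 2 ≤ 5 * m := by nlinarith [sq_nonneg (√x - √m)]
  calc (x - m) ^ 2 = ((√x - √m) * (√x + √m)) ^ 2 := by congr 1; linear_combination -hs + ht
    _ = (√x - √m) ^ 2 * (√x + √m) ^ 2 := mul_pow _ _ _
    _ ≤ (√x - √m) ^ 2 * (5 * m) := by gcongr

lemma div_le_sq_sqrt_sub_sqrt {x m : ℝ} (hx : 0 ≤ x) (hm : 0 ≤ m)
    (hxm : x < m / 2 ∨ 3 / 2 * m < x) : m / 25 ≤ (√x - √m) ^ 2 := by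
  have hs := sq_sqrt hx
  have ht := sq_sqrt hm
  have hs0 := sqrt_nonneg x
  have ht0 := sqrt_nonneg m
  rcases hxm with h | h
  · have : √x ≤ 4 / 5 * √m := by nlinarith
    nlinarith
  · have : 6 / 5 * √m ≤ √x := by nlinarith
    nlinarith

lemma exp_sub_add_sq_sqrt_sub_sqrt_le (k : ℕ) {m : ℝ} (hm : 0 < m) :
    exp (k - m + (√k - √m) ^ 2) ≤ ((k : ℝ) / m) ^ k := by
  rcases Nat.eq_zero_or_pos k with rfl | hk
  · simp [sq_sqrt hm.le]
  have hk' : (0 : ℝ) < k := Nat.cast_pos.2 hk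
  have hsk := sqrt_pos.2 hk'
  have hsm := sqrt_pos.2 hm
  have hlog : 2 * (1 - √m / √k) ≤ log (k / m) := by
    have h := one_sub_inv_le_log_of_pos (div_pos hsk hsm)
    rw [inv_div] at h
    calc 2 * (1 - √m / √k) ≤ 2 * log (√k / √m) := by linarith
      _ = log ((√k / √m) ^ 2) := by rw [log_pow]; norm_num
      _ = log (k / m) := by rw [div_pow, sq_sqrt hk'.le, sq_sqrt hm.le]
  rw [← exp_log (pow_pos (div_pos hk' hm) k), log_pow]
  refine exp_le_exp.2 ?_
  calc (k : ℝ) - m + (√k - √m) ^ 2 = k * (2 * (1 - √m / √k)) := by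
        have hk2 := sq_sqrt hk'.le
        have hm2 := sq_sqrt hm.le
        set s := √(k : ℝ)
        set t := √m
        rw [← hk2, ← hm2]
        field_simp
        ring
    _ ≤ k * log (k / m) := mul_le_mul_of_nonneg_left hlog hk'.le

theorem Stirling.factorial_le_exp_one_mul_sqrt_mul {n : ℕ} (hn : n ≠ 0) :
    (n ! : ℝ) ≤ exp 1 * √n * (n / exp 1) ^ n := by
  have hmono : Stirling.stirlingSeq n ≤ Stirling.stirlingSeq 1 := by
    obtain ⟨m, rfl⟩ := Nat.exists_eq_succ_of_ne_zero hn
    exact Stirling.stirlingSeq'_antitone (Nat.zero_le m)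
  rw [Stirling.stirlingSeq_one, Stirling.stirlingSeq, div_le_iff₀ (by positivity)] at hmono
  calc (n ! : ℝ) ≤ exp 1 / √2 * (√(2 * n) * (n / exp 1) ^ n) := hmono
    _ = exp 1 * √n * (n / exp 1) ^ n := by
      rw [sqrt_mul zero_le_two]; field_simp

section Multinomial

variable {ι : Type*} [Fintype ι]

theorem Nat.multinomial_mul_prod_pow_self_le [DecidableEq ι] (k : ι → ℕ) :
    Nat.multinomial univ k * ∏ i, k i ^ k i ≤ (∑ i, k i) ^ ∑ i, k i := by
  rw [sum_pow_eq_sum_piAntidiag]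
  exact single_le_sum (f := fun f => Nat.multinomial univ f * ∏ i, k i ^ f i)
    (fun _ _ => Nat.zero_le _) (mem_piAntidiag.2 ⟨rfl, fun i _ => mem_univ i⟩)

theorem Nat.multinomial_mul_prod_sqrt_mul_pow_self_le {n : ℕ} (k : ι → ℕ) (hk : ∑ i, k i = n)
    (hn : n ≠ 0) :
    (Nat.multinomial univ k : ℝ) * ∏ i, (√(k i) * (k i : ℝ) ^ k i) ≤ exp 1 * √n * (n : ℝ) ^ n := by
  have hlower : ∀ i, √(k i) * ((k i : ℝ) / exp 1) ^ k i ≤ (k i)! := fun i =>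
    (mul_le_mul_of_nonneg_right
      (Real.sqrt_le_sqrt (by nlinarith [pi_gt_three, (k i).cast_nonneg (α := ℝ)]))
      (by positivity)).trans (Stirling.le_factorial_stirling _)
  have hspec : (Nat.multinomial univ k : ℝ) * ∏ i, ((k i)! : ℝ) = n ! := by
    rw [← hk]; exact_mod_cast (mul_comm _ _).trans (Nat.multinomial_spec univ k)
  have hscale : ∏ i, (√(k i) * ((k i : ℝ) / exp 1) ^ k i)
      = (∏ i, (√(k i) * (k i : ℝ) ^ k i)) / exp 1 ^ n := by
    rw [← hk, ← prod_pow_eq_pow_sum, ← prod_div_distrib]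
    exact prod_congr rfl fun i _ => by rw [div_pow, mul_div_assoc]
  calc (Nat.multinomial univ k : ℝ) * ∏ i, (√(k i) * (k i : ℝ) ^ k i)
      = exp 1 ^ n * ((Nat.multinomial univ k : ℝ) * ∏ i, (√(k i) * ((k i : ℝ) / exp 1) ^ k i)) := by
        rw [hscale]; field_simp
    _ ≤ exp 1 ^ n * ((Nat.multinomial univ k : ℝ) * ∏ i, ((k i)! : ℝ)) := by
        gcongr with i; exact hlower i
    _ ≤ exp 1 ^ n * (exp 1 * √n * (n / exp 1) ^ n) := by
        rw [hspec]; gcongr; exact Stirling.factorial_le_exp_one_mul_sqrt_mul hn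
    _ = exp 1 * √n * (n : ℝ) ^ n := by rw [div_pow]; field_simp

theorem exp_sum_sq_sqrt_sub_sqrt_mul_pow_le (k : ι → ℕ) {m : ℝ} (hm : 0 < m)
    (hkm : ∑ i, (k i : ℝ) = Fintype.card ι * m) :
    exp (∑ i, (√(k i) - √m) ^ 2) * m ^ (∑ i, k i) ≤ ∏ i, (k i : ℝ) ^ k i := by
  have hcenter : ∑ i, (√(k i) - √m) ^ 2 = ∑ i, ((k i : ℝ) - m + (√(k i) - √m) ^ 2) := by
    rw [sum_add_distrib, sum_sub_distrib, hkm]; simp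
  rw [hcenter, exp_sum, ← prod_pow_eq_pow_sum, ← le_div_iff₀ (prod_pos fun _ _ => by positivity),
    ← prod_div_distrib]
  exact prod_le_prod (fun _ _ => (exp_pos _).le) fun i _ => by
    rw [← div_pow]; exact exp_sub_add_sq_sqrt_sub_sqrt_le (k i) hm

end Multinomial

-- `e √n / ∏ⱼ √kⱼ ≤ e · 6^{3/2} / n ≤ 45 / n`
lemma Nat.multinomial_mul_prod_pow_self_le_of_forall_le {n : ℕ} (k : Fin 3 → ℕ) (hk : ∑ j, k j = n)
    (hn : n ≠ 0) (hkn : ∀ j, (n : ℝ) / 6 ≤ k j) :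
    (Nat.multinomial univ k : ℝ) * ∏ j, (k j : ℝ) ^ k j ≤ 45 / n * (n : ℝ) ^ n := by
  have hn' : (0 : ℝ) < n := by positivity
  have hcube : (√n / √6) ^ 3 = n * √n / (6 * √6) := by
    rw [div_pow, pow_succ, sq_sqrt hn'.le, pow_succ, sq_sqrt (by norm_num)]
  have hsqrt : ∏ j : Fin 3, √(n / 6) ≤ ∏ j, √(k j) :=
    prod_le_prod (fun _ _ => sqrt_nonneg _) fun j _ => Real.sqrt_le_sqrt (hkn j)
  rw [Fin.prod_const, sqrt_div' _ (by norm_num : (0 : ℝ) ≤ 6)] at hsqrt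
  have he : exp 1 ≤ 3 := by linarith [exp_one_lt_d9]
  have h6 : √6 ≤ 5 / 2 := by nlinarith [sq_sqrt (by norm_num : (0 : ℝ) ≤ 6), sqrt_nonneg 6]
  refine le_of_mul_le_mul_right ?_ (by positivity : 0 < (√n / √6) ^ 3)
  calc (Nat.multinomial univ k : ℝ) * (∏ j, (k j : ℝ) ^ k j) * (√n / √6) ^ 3
      ≤ (Nat.multinomial univ k : ℝ) * (∏ j, (k j : ℝ) ^ k j) * ∏ j, √(k j) := by gcongr
    _ = (Nat.multinomial univ k : ℝ) * ∏ j, (√(k j) * (k j : ℝ) ^ k j) := by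
        rw [prod_mul_distrib]; ring
    _ ≤ exp 1 * √n * (n : ℝ) ^ n := Nat.multinomial_mul_prod_sqrt_mul_pow_self_le k hk hn
    _ ≤ 45 / n * (n : ℝ) ^ n * (√n / √6) ^ 3 := by
        rw [hcube]
        field_simp
        nlinarith [mul_le_mul he h6 (sqrt_nonneg 6) (by norm_num)]

lemma three_pow_neg_mul_multinomial_le_mul_exp {n : ℕ} (k : Fin 3 → ℕ) (hk : ∑ j, k j = n)
    (hn : n ≠ 0) :
    (3 : ℝ) ^ (-(n : ℤ)) * Nat.multinomial univ k ≤
      Nat.multinomial univ k * (∏ j, (k j : ℝ) ^ k j) / (n : ℝ) ^ n *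
        exp (-∑ j, (√(k j : ℝ) - √(n / 3)) ^ 2) := by
  set m : ℝ := n / 3 with hm_def
  set H := ∑ j, (√(k j : ℝ) - √m) ^ 2
  set P := ∏ j, (k j : ℝ) ^ k j
  have hm : 0 < m := by positivity
  have hHell : exp H * m ^ n ≤ P := by
    have hkm : ∑ j, (k j : ℝ) = Fintype.card (Fin 3) * m := by
      rw [Fintype.card_fin, hm_def]; push_cast [← hk]; ring
    simpa only [hk] using exp_sum_sq_sqrt_sub_sqrt_mul_pow_le k hm hkm
  have hmP : m ^ n ≤ P * exp (-H) := by
    rw [exp_neg, ← div_eq_mul_inv, le_div_iff₀ (exp_pos _)]; linarith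
  have h3 : (3 : ℝ) ^ (-(n : ℤ)) = m ^ n / (n : ℝ) ^ n := by
    rw [zpow_neg, zpow_natCast, hm_def, div_pow]; field_simp
  calc (3 : ℝ) ^ (-(n : ℤ)) * Nat.multinomial univ k
      = Nat.multinomial univ k * m ^ n / (n : ℝ) ^ n := by rw [h3]; ring
    _ ≤ Nat.multinomial univ k * (P * exp (-H)) / (n : ℝ) ^ n := by gcongr
    _ = Nat.multinomial univ k * P / (n : ℝ) ^ n * exp (-H) := by ring

lemma three_pow_neg_mul_multinomial_le_div {n : ℕ} (k : Fin 3 → ℕ) (hk : ∑ j, k j = n)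
    (hn : n ≠ 0) (hV : 0 < ∑ j, ((k j : ℝ) - n / 3) ^ 2)
    (hcentral : ∀ j, (n : ℝ) / 6 ≤ k j ∧ (k j : ℝ) ≤ n / 2) :
    (3 : ℝ) ^ (-(n : ℤ)) * Nat.multinomial univ k ≤ 75 / ∑ j, ((k j : ℝ) - n / 3) ^ 2 := by
  set V := ∑ j, ((k j : ℝ) - n / 3) ^ 2
  set m : ℝ := n / 3 with hm_def
  have hm : 0 < m := by positivity
  have hstir : Nat.multinomial univ k * (∏ j, (k j : ℝ) ^ k j) / (n : ℝ) ^ n ≤ 45 / n := by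
    rw [div_le_iff₀ (by positivity)]
    exact Nat.multinomial_mul_prod_pow_self_le_of_forall_le k hk hn fun j => (hcentral j).1
  have hH : V / (5 * m) ≤ ∑ j, (√(k j : ℝ) - √m) ^ 2 := by
    rw [sum_div]
    exact sum_le_sum fun j _ => sq_sub_div_le_sq_sqrt_sub_sqrt (Nat.cast_nonneg _) hm
      (by linarith [(hcentral j).2])
  calc (3 : ℝ) ^ (-(n : ℤ)) * Nat.multinomial univ k
      ≤ Nat.multinomial univ k * (∏ j, (k j : ℝ) ^ k j) / (n : ℝ) ^ n *
          exp (-∑ j, (√(k j : ℝ) - √m) ^ 2) :=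
        three_pow_neg_mul_multinomial_le_mul_exp k hk hn
    _ ≤ 45 / n * (V / (5 * m))⁻¹ := by
        gcongr
        exact (exp_le_exp.2 (neg_le_neg hH)).trans (exp_neg_le_inv (by positivity))
    _ = 75 / V := by rw [hm_def]; field_simp; ring

lemma three_pow_neg_mul_multinomial_le_exp {n : ℕ} (k : Fin 3 → ℕ) (hk : ∑ j, k j = n)
    (hn : n ≠ 0) (j : Fin 3) (hj : (k j : ℝ) < n / 6 ∨ (n : ℝ) / 2 < k j) :
    (3 : ℝ) ^ (-(n : ℤ)) * Nat.multinomial univ k ≤ exp (-(n / 75)) := by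
  set m : ℝ := n / 3 with hm_def
  have hMP : Nat.multinomial univ k * (∏ j, (k j : ℝ) ^ k j) ≤ (n : ℝ) ^ n := by
    have h := Nat.multinomial_mul_prod_pow_self_le k
    rw [hk] at h
    exact_mod_cast h
  have hH : n / 75 ≤ ∑ j, (√(k j : ℝ) - √m) ^ 2 :=
    calc (n : ℝ) / 75 = m / 25 := by ring
      _ ≤ (√(k j : ℝ) - √m) ^ 2 := div_le_sq_sqrt_sub_sqrt (Nat.cast_nonneg _) (by positivity)
          (by rw [hm_def]; rcases hj with h | h; exacts [.inl (by linarith), .inr (by linarith)])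
      _ ≤ ∑ j, (√(k j : ℝ) - √m) ^ 2 :=
          single_le_sum (fun i _ => sq_nonneg (√(k i : ℝ) - √m)) (mem_univ j)
  calc (3 : ℝ) ^ (-(n : ℤ)) * Nat.multinomial univ k
      ≤ Nat.multinomial univ k * (∏ j, (k j : ℝ) ^ k j) / (n : ℝ) ^ n *
          exp (-∑ j, (√(k j : ℝ) - √m) ^ 2) :=
        three_pow_neg_mul_multinomial_le_mul_exp k hk hn
    _ ≤ 1 * exp (-(n / 75)) := by
        gcongr
        exact div_le_one_of_le₀ hMP (by positivity)
    _ = exp (-(n / 75)) := one_mul _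

theorem three_pow_neg_mul_multinomial_le {n : ℕ} (k : Fin 3 → ℕ) (hk : ∑ j, k j = n)
    (hV : 0 < ∑ j, ((k j : ℝ) - n / 3) ^ 2) :
    (3 : ℝ) ^ (-(n : ℤ)) * Nat.multinomial univ k ≤
      75 / ∑ j, ((k j : ℝ) - n / 3) ^ 2 + exp (-(n / 75)) := by
  have hn : n ≠ 0 := by
    rintro rfl
    simp [fun j => sum_eq_zero_iff.1 hk j (mem_univ j)] at hV
  by_cases hcentral : ∀ j, (n : ℝ) / 6 ≤ k j ∧ (k j : ℝ) ≤ n / 2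
  · exact (three_pow_neg_mul_multinomial_le_div k hk hn hV hcentral).trans
      (le_add_of_nonneg_right (exp_pos _).le)
  · push Not at hcentral
    obtain ⟨j, hj⟩ := hcentral
    exact (three_pow_neg_mul_multinomial_le_exp k hk hn j
      ((lt_or_ge (k j : ℝ) (n / 6)).imp_right hj)).trans
      (le_add_of_nonneg_left (by positivity))

lemma triTau_re : triTau.re = -(1 / 2) := by
  rw [triTau, show 2 * ↑π * Complex.I / 3 = ((2 * π / 3 : ℝ) : ℂ) * Complex.I by push_cast; ring,
    Complex.exp_ofReal_mul_I_re, show 2 * π / 3 = π - π / 3 by ring, cos_pi_sub, cos_pi_div_three]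

lemma triTau_im : triTau.im = √3 / 2 := by
  rw [triTau, show 2 * ↑π * Complex.I / 3 = ((2 * π / 3 : ℝ) : ℂ) * Complex.I by push_cast; ring,
    Complex.exp_ofReal_mul_I_im, show 2 * π / 3 = π - π / 3 by ring, sin_pi_sub, sin_pi_div_three]

lemma triTau_sq : triTau ^ 2 = -1 - triTau := by
  have h3 := mul_self_sqrt (by norm_num : (0 : ℝ) ≤ 3)
  apply Complex.ext <;> simp [sq, triTau_re, triTau_im] <;> linarith

lemma sum_triTau_pow : ∑ j : Fin 3, triTau ^ (j : ℕ) = 0 := by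
  simp [Fin.sum_univ_three, triTau_sq]

lemma norm_sq_add_mul_triTau (u v : ℝ) : ‖(u : ℂ) + v * triTau‖ ^ 2 = u ^ 2 - u * v + v ^ 2 := by
  have h3 := mul_self_sqrt (by norm_num : (0 : ℝ) ≤ 3)
  rw [Complex.sq_norm, Complex.normSq_apply]
  simp only [Complex.add_re, Complex.ofReal_re, Complex.mul_re, triTau_re, Complex.ofReal_im,
    triTau_im, Complex.add_im, Complex.mul_im]
  linear_combination v ^ 2 / 4 * h3

lemma norm_sq_sum_mul_triTau_pow (x : Fin 3 → ℝ) (hx : ∑ j, x j = 0) :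
    ‖∑ j, (x j : ℂ) * triTau ^ (j : ℕ)‖ ^ 2 = 3 / 2 * ∑ j, x j ^ 2 := by
  simp only [Fin.sum_univ_three, Fin.val_zero, Fin.val_one, Fin.val_two, pow_zero, pow_one,
    mul_one] at hx ⊢
  have hlattice : (x 0 : ℂ) + x 1 * triTau + x 2 * triTau ^ 2
      = ((x 0 - x 2 : ℝ) : ℂ) + ((x 1 - x 2 : ℝ) : ℂ) * triTau := by
    push_cast
    linear_combination (x 2 : ℂ) * triTau_sq
  rw [hlattice, norm_sq_add_mul_triTau, show x 0 = -x 1 - x 2 by linarith]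
  ring

section TriangularWalk

variable {n : ℕ}

lemma sum_triTau_pow_eq_sum_fiberCard (s : Fin n → Fin 3) :
    ∑ i, triTau ^ (s i : ℕ) = ∑ j, (fiberCard s j : ℂ) * triTau ^ (j : ℕ) := by
  rw [← sum_fiberwise univ s]
  refine sum_congr rfl fun j _ => ?_
  rw [sum_congr rfl fun i hi => by rw [(mem_filter.1 hi).2], sum_const, nsmul_eq_mul]
  rfl

lemma norm_sq_sum_triTau_pow (s : Fin n → Fin 3) :
    ‖∑ i, triTau ^ (s i : ℕ)‖ ^ 2 = 3 / 2 * ∑ j, ((fiberCard s j : ℝ) - n / 3) ^ 2 := by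
  have hcenter : ∑ i, triTau ^ (s i : ℕ)
      = ∑ j, (((fiberCard s j : ℝ) - n / 3 : ℝ) : ℂ) * triTau ^ (j : ℕ) := by
    simp only [Complex.ofReal_sub, Complex.ofReal_natCast, sub_mul, sum_sub_distrib,
      ← mul_sum, sum_triTau_pow, mul_zero, sub_zero]
    exact sum_triTau_pow_eq_sum_fiberCard s
  rw [hcenter]
  refine norm_sq_sum_mul_triTau_pow _ ?_
  rw [sum_sub_distrib, ← Nat.cast_sum, sum_fiberCard]
  simp only [Fintype.card_fin, sum_const, card_univ, nsmul_eq_mul, Nat.cast_ofNat]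
  ring

lemma fiberCard_eq_of_sum_triTau_pow_eq {s t : Fin n → Fin 3}
    (h : ∑ i, triTau ^ (s i : ℕ) = ∑ i, triTau ^ (t i : ℕ)) : fiberCard s = fiberCard t := by
  set x : Fin 3 → ℝ := fun j => fiberCard s j - fiberCard t j
  have hx : ∑ j, x j = 0 := by simp [x, sum_sub_distrib, ← Nat.cast_sum, sum_fiberCard]
  have hzero : ∑ j, (x j : ℂ) * triTau ^ (j : ℕ) = 0 := by
    simp only [x, Complex.ofReal_sub, Complex.ofReal_natCast, sub_mul, sum_sub_distrib,
      ← sum_triTau_pow_eq_sum_fiberCard, h, sub_self]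
  have hsq := norm_sq_sum_mul_triTau_pow x hx
  rw [hzero, norm_zero, zero_pow two_ne_zero] at hsq
  have hx0 := (sum_eq_zero_iff_of_nonneg fun j _ => sq_nonneg (x j)).1 (by linarith)
  funext j
  exact_mod_cast sub_eq_zero.1 (pow_eq_zero_iff two_ne_zero |>.1 (hx0 j (mem_univ j)))

end TriangularWalk

lemma triWalkProb_le_one (n : ℕ) (y : ℂ) : triWalkProb n y ≤ 1 := by
  have hcard : (Nat.card {s : Fin n → Fin 3 // ∑ i, triTau ^ (s i : ℕ) = y} : ℝ) ≤ 3 ^ n := by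
    rw [Nat.card_eq_fintype_card]
    exact_mod_cast (Fintype.card_subtype_le _).trans_eq (by simp)
  rw [triWalkProb, zpow_neg, zpow_natCast, inv_mul_le_iff₀ (by positivity), mul_one]
  exact hcard

theorem triWalkProb_le_div_add_exp {y : ℂ} (hy : y ≠ 0) (n : ℕ) :
    triWalkProb n y ≤ 113 / ‖y‖ ^ 2 + exp (-(n / 75)) := by
  rcases isEmpty_or_nonempty {s : Fin n → Fin 3 // ∑ i, triTau ^ (s i : ℕ) = y}
    with hempty | ⟨⟨s₀, rfl⟩⟩
  · rw [triWalkProb, Nat.card_of_isEmpty, Nat.cast_zero, mul_zero]; positivity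
  set V := ∑ j, ((fiberCard s₀ j : ℝ) - n / 3) ^ 2
  have hnorm := norm_sq_sum_triTau_pow s₀
  have hV : 0 < V := by
    have := pow_pos (norm_pos_iff.2 hy) 2
    rw [hnorm] at this; linarith
  have hcard : Nat.card {s : Fin n → Fin 3 // ∑ i, triTau ^ (s i : ℕ) = ∑ i, triTau ^ (s₀ i : ℕ)}
      ≤ Nat.multinomial univ (fiberCard s₀) := by
    rw [Nat.card_eq_fintype_card, Fintype.card_subtype]
    refine (card_le_card fun s hs => mem_filter.2 ⟨mem_univ _, ?_⟩).trans
      (card_fiberCard_eq_le_multinomial s₀)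
    exact fiberCard_eq_of_sum_triTau_pow_eq (mem_filter.1 hs).2
  calc triWalkProb n _ ≤ (3 : ℝ) ^ (-(n : ℤ)) * Nat.multinomial univ (fiberCard s₀) := by
        unfold triWalkProb; gcongr
    _ ≤ 75 / V + exp (-(n / 75)) :=
        three_pow_neg_mul_multinomial_le _ (by rw [sum_fiberCard, Fintype.card_fin]) hV
    _ ≤ 113 / ‖∑ i, triTau ^ (s₀ i : ℕ)‖ ^ 2 + exp (-(n / 75)) := by
        rw [hnorm]
        gcongr ?_ + _
        rw [div_le_div_iff₀ hV (by positivity)]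
        linarith

/-- **Uniform short-time Green function bound on the directed triangular lattice**
(the bound on the term I in the proof of Proposition 3.12): there is a constant `C`
such that for every lattice point `y = a + bτ`,
`Σ_{n=0}^{⌊|y|²⌋} p_n(y) ≤ C`. -/
theorem triangular_short_time_green_bound :
    ∃ C > 0, ∀ a b : ℤ,
      ∑ n ∈ Finset.range (⌊‖(a : ℂ) + (b : ℂ) * triTau‖ ^ 2⌋₊ + 1),
        triWalkProb n ((a : ℂ) + (b : ℂ) * triTau) ≤ C := by
  refine ⟨190, by norm_num, fun a b => ?_⟩
  set y : ℂ := (a : ℂ) + (b : ℂ) * triTau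
  set N := ⌊‖y‖ ^ 2⌋₊
  have hN : (N : ℝ) ≤ ‖y‖ ^ 2 := Nat.floor_le (by positivity)
  have hterm : ∀ n ∈ range N, triWalkProb (n + 1) y ≤ 113 / ‖y‖ ^ 2 + exp (-(n / 75)) := by
    intro n hn
    have hy : y ≠ 0 := fun hy0 => by simp [N, hy0] at hn
    refine (triWalkProb_le_div_add_exp hy (n + 1)).trans ?_
    gcongr; linarith
  rw [sum_range_succ']
  calc ∑ n ∈ range N, triWalkProb (n + 1) y + triWalkProb 0 y
      ≤ ∑ n ∈ range N, (113 / ‖y‖ ^ 2 + exp (-(n / 75))) + 1 :=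
        add_le_add (sum_le_sum hterm) (triWalkProb_le_one 0 y)
    _ = 113 * (N / ‖y‖ ^ 2) + ∑ n ∈ range N, exp (-(n / 75)) + 1 := by
        rw [sum_add_distrib, sum_const, card_range, nsmul_eq_mul]; ring
    _ ≤ 113 * 1 + (75 + 1) + 1 := by
        gcongr
        · exact div_le_one_of_le₀ hN (by positivity)
        · exact sum_range_exp_neg_div_le (by norm_num) N
    _ = 190 := by norm_num
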